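/- arXiv:1012.0079 — 5 statements merged into one kernel-verified Lean document; each statement's English description precedes it below -/
import Mathlib

section
/- Let Y be a Hilbert space, J an anti-self-adjoint operator on Y with bounded inverse ‖J^{-1}‖ ≤ C₀, and let g : [t₀, t₀+T] → Y be continuously differentiable with ‖g(t)‖ ≤ M₀ and ‖g'(t)‖ ≤ M₁ for all t. Then for all t ∈ [t₀, t₀+T] and all ε > 0, ‖∫_{t₀}^{t} e^{((t-τ)/ε)J} g(τ) dτ‖ ≤ ε C₀ (2 M₀ + T M₁). -/
/-!
Put `F τ = U((t - τ)/ε) J⁻¹ g(τ)`. Since `d/ds U(s) J⁻¹ y = U(s) y`,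
`F' = -ε⁻¹ U((t - τ)/ε) g + U((t - τ)/ε) J⁻¹ g'`, so the fundamental theorem of calculus turns the
oscillatory integral into `ε (∫ U((t - τ)/ε) J⁻¹ g' - (F t - F t₀))`. As `U` is isometric, the
boundary terms are at most `ε C₀ M₀` each and the integral at most `ε C₀ M₁ T`.
Because `U` is only strongly continuous, the product rule for `F` has to be proved by hand.
-/

open Filter Topology Asymptotics MeasureTheory Set

section ProductRule

variable {𝕜 E F : Type*} [NontriviallyNormedField 𝕜] [NormedAddCommGroup E] [NormedSpace 𝕜 E]
  [NormedAddCommGroup F] [NormedSpace 𝕜 F]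

/-- Split `A y (v y) = A y (v x) + A y (v y - v x)`: local boundedness of `A` makes the second
term differentiable at `x` with derivative `A x v'`. -/
theorem HasDerivAt.clm_apply_of_norm_le {A : 𝕜 → E →L[𝕜] F} {v : 𝕜 → E} {v' : E} {a : F}
    {x : 𝕜} {C : ℝ} (hv : HasDerivAt v v' x) (hAv : HasDerivAt (fun y => A y (v x)) a x)
    (hAc : ContinuousAt (fun y => A y v') x) (hA : ∀ᶠ y in 𝓝 x, ‖A y‖ ≤ C) :
    HasDerivAt (fun y => A y (v y)) (a + A x v') x := by
  have hrem : HasDerivAt (fun y => A y (v y - v x)) (A x v') x := by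
    rw [hasDerivAt_iff_isLittleO]
    have hlin : (fun y => A y (v y - v x - (y - x) • v')) =o[𝓝 x] fun y => y - x :=
      (IsBigO.of_bound C (hA.mono fun y hy => (A y).le_of_opNorm_le hy _)).trans_isLittleO
        (hasDerivAt_iff_isLittleO.mp hv)
    have hcont : (fun y => (y - x) • (A y v' - A x v')) =o[𝓝 x] fun y => y - x := by
      have h := (isBigO_refl (fun y => y - x) (𝓝 x)).smul_isLittleO
        (isLittleO_one_iff 𝕜 |>.mpr (tendsto_sub_nhds_zero_iff.mpr hAc.tendsto))
      simpa using h
    refine (hlin.add hcont).congr_left fun y => ?_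
    simp only [sub_self, map_zero, map_sub, map_smul, smul_sub]
    abel
  convert hAv.add hrem using 1
  funext y
  simp

end ProductRule

theorem continuous_uncurry_of_norm_le {X E F : Type*} [TopologicalSpace X]
    [SeminormedAddCommGroup E] [NormedSpace ℝ E] [SeminormedAddCommGroup F] [NormedSpace ℝ F]
    {U : X → E →L[ℝ] F} {C : ℝ} (hU : ∀ s, ‖U s‖ ≤ C) (hUcont : ∀ y, Continuous fun s => U s y) :
    Continuous fun p : X × E => U p.1 p.2 :=
  continuous_prod_of_continuous_lipschitzWith' _ C.toNNReal
    (fun s => (U s).lipschitz.weaken <| by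
      rw [← NNReal.coe_le_coe, coe_nnnorm]; exact (hU s).trans C.le_coe_toNNReal) hUcont

theorem aestronglyMeasurable_of_hasDerivAt {E : Type*} [NormedAddCommGroup E] [NormedSpace ℝ E]
    [CompleteSpace E] {g g' : ℝ → E} {s : Set ℝ} {μ : Measure ℝ} (hs : MeasurableSet s)
    (hg : ∀ x ∈ s, HasDerivAt g (g' x) x) : AEStronglyMeasurable g' (μ.restrict s) :=
  (aestronglyMeasurable_deriv g _).congr (ae_restrict_of_forall_mem hs fun x hx => (hg x hx).deriv)

theorem intervalIntegrable_of_norm_le {E : Type*} [NormedAddCommGroup E] {f : ℝ → E} {a b C : ℝ}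
    (hf : AEStronglyMeasurable f (volume.restrict (uIoc a b))) (hC : ∀ x ∈ uIoc a b, ‖f x‖ ≤ C) :
    IntervalIntegrable f volume a b :=
  intervalIntegrable_const.mono_fun' hf (ae_restrict_of_forall_mem measurableSet_uIoc hC)

/-- The fundamental theorem of calculus for `F` gives `∫ Φ = ε (∫ Ψ - (F b - F a))`. -/
theorem norm_integral_le_of_hasDerivAt_neg_inv_smul_add {E : Type*} [NormedAddCommGroup E]
    [NormedSpace ℝ E] [CompleteSpace E] {F Φ Ψ : ℝ → E}
    {a b ε A B : ℝ} (hε : 0 < ε) (hF : ∀ x ∈ uIcc a b, HasDerivAt F (-ε⁻¹ • Φ x + Ψ x) x)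
    (hΦ : IntervalIntegrable Φ volume a b) (hΨ : IntervalIntegrable Ψ volume a b)
    (hFA : ∀ x ∈ uIcc a b, ‖F x‖ ≤ A) (hΨB : ∀ x ∈ uIoc a b, ‖Ψ x‖ ≤ B) :
    ‖∫ x in a..b, Φ x‖ ≤ ε * (2 * A + B * |b - a|) := by
  have hFTC := intervalIntegral.integral_eq_sub_of_hasDerivAt hF ((hΦ.smul _).add hΨ)
  rw [intervalIntegral.integral_add (f := fun x => -ε⁻¹ • Φ x) (hΦ.smul _) hΨ,
    intervalIntegral.integral_smul] at hFTC
  have hΦeq : ∫ x in a..b, Φ x = ε • ((∫ x in a..b, Ψ x) - (F b - F a)) := by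
    rw [← hFTC, sub_add_cancel_right, neg_smul, neg_neg, smul_smul, mul_inv_cancel₀ hε.ne',
      one_smul]
  have hA : ‖F b - F a‖ ≤ 2 * A := by
    linarith [norm_sub_le (F b) (F a), hFA b right_mem_uIcc, hFA a left_mem_uIcc]
  calc ‖∫ x in a..b, Φ x‖
      = ε * ‖(∫ x in a..b, Ψ x) - (F b - F a)‖ := by
        rw [hΦeq, norm_smul, Real.norm_of_nonneg hε.le]
    _ ≤ ε * (2 * A + B * |b - a|) := by
        gcongr
        linarith [norm_sub_le (∫ x in a..b, Ψ x) (F b - F a),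
          intervalIntegral.norm_integral_le_of_norm_le_const hΨB]

section IsometryGroup

variable {Y : Type*} [NormedAddCommGroup Y] [NormedSpace ℝ Y] (U : ℝ → Y →L[ℝ] Y)

theorem hasDerivAt_rescaled_apply_inv (Jinv : Y →L[ℝ] Y)
    (hUiso : ∀ (s : ℝ) (y : Y), ‖U s y‖ = ‖y‖)
    (hUcont : ∀ y : Y, Continuous fun s : ℝ => U s y)
    (hgen : ∀ (y : Y) (s : ℝ), HasDerivAt (fun s : ℝ => U s (Jinv y)) (U s y) s)
    {g : ℝ → Y} {g' : Y} {t ε τ : ℝ} (hg : HasDerivAt g g' τ) :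
    HasDerivAt (fun τ => U ((t - τ) / ε) (Jinv (g τ)))
      (-ε⁻¹ • U ((t - τ) / ε) (g τ) + U ((t - τ) / ε) (Jinv g')) τ := by
  have hφ : HasDerivAt (fun τ : ℝ => (t - τ) / ε) (-ε⁻¹) τ := by
    simpa [neg_div, one_div] using ((hasDerivAt_id τ).const_sub t).div_const ε
  refine hg.clm_apply_of_norm_le (A := fun τ => (U ((t - τ) / ε)).comp Jinv) (C := ‖Jinv‖)
    ((hgen (g τ) _).scomp τ hφ) ((hUcont _).comp (by fun_prop)).continuousAt
    (Eventually.of_forall fun τ => ?_)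
  exact ContinuousLinearMap.opNorm_le_bound _ (norm_nonneg Jinv) fun y =>
    (hUiso _ _).trans_le (Jinv.le_opNorm y)

theorem intervalIntegrable_apply_comp (hUiso : ∀ (s : ℝ) (y : Y), ‖U s y‖ = ‖y‖)
    (hUcont : ∀ y : Y, Continuous fun s : ℝ => U s y) {φ : ℝ → ℝ} {h : ℝ → Y} {a b M : ℝ}
    (hφ : Continuous φ) (hh : AEStronglyMeasurable h (volume.restrict (uIoc a b)))
    (hM : ∀ x ∈ uIoc a b, ‖h x‖ ≤ M) :
    IntervalIntegrable (fun x => U (φ x) (h x)) volume a b := by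
  have hU : ∀ s, ‖U s‖ ≤ 1 := fun s =>
    ContinuousLinearMap.opNorm_le_bound _ zero_le_one fun y => by rw [hUiso, one_mul]
  exact intervalIntegrable_of_norm_le
    ((continuous_uncurry_of_norm_le hU hUcont).comp_aestronglyMeasurable
      (hφ.aestronglyMeasurable.prodMk hh))
    fun x hx => (hUiso _ _).trans_le (hM x hx)

end IsometryGroup

theorem oscillatory_forcing_bound_general
    {Y : Type*} [NormedAddCommGroup Y] [NormedSpace ℝ Y] [CompleteSpace Y]
    (U : ℝ → Y →L[ℝ] Y) (Jinv : Y →L[ℝ] Y)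
    (C₀ M₀ M₁ T t₀ ε : ℝ) (hε : 0 < ε)
    (hUiso : ∀ (s : ℝ) (y : Y), ‖U s y‖ = ‖y‖)
    (hUcont : ∀ y : Y, Continuous fun s : ℝ => U s y)
    (hgen : ∀ (y : Y) (s : ℝ), HasDerivAt (fun s : ℝ => U s (Jinv y)) (U s y) s)
    (hJinv : ‖Jinv‖ ≤ C₀)
    (g g' : ℝ → Y)
    (hg : ∀ t ∈ Set.Icc t₀ (t₀ + T), HasDerivAt g (g' t) t)
    (hgM : ∀ t ∈ Set.Icc t₀ (t₀ + T), ‖g t‖ ≤ M₀)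
    (hg'M : ∀ t ∈ Set.Icc t₀ (t₀ + T), ‖g' t‖ ≤ M₁) :
    ∀ t ∈ Set.Icc t₀ (t₀ + T),
      ‖∫ τ in t₀..t, U ((t - τ) / ε) (g τ)‖ ≤ ε * C₀ * (2 * M₀ + T * M₁) := by
  rintro t ⟨ht₀, htT⟩
  have hsub : uIcc t₀ t ⊆ Icc t₀ (t₀ + T) := by
    rw [uIcc_of_le ht₀]; exact Icc_subset_Icc_right htT
  have hsubo : uIoc t₀ t ⊆ Icc t₀ (t₀ + T) := uIoc_subset_uIcc.trans hsub
  have hφ : Continuous fun τ : ℝ => (t - τ) / ε := by fun_prop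
  have hgc : ContinuousOn g (uIoc t₀ t) := fun τ hτ =>
    (hg τ (hsubo hτ)).continuousAt.continuousWithinAt
  have hJg' : AEStronglyMeasurable (fun τ => Jinv (g' τ)) (volume.restrict (uIoc t₀ t)) :=
    Jinv.continuous.comp_aestronglyMeasurable <|
      aestronglyMeasurable_of_hasDerivAt measurableSet_uIoc fun τ hτ => hg τ (hsubo hτ)
  have hbound := norm_integral_le_of_hasDerivAt_neg_inv_smul_add hε
    (fun τ hτ => hasDerivAt_rescaled_apply_inv U Jinv hUiso hUcont hgen (t := t) (hg τ (hsub hτ)))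
    (intervalIntegrable_apply_comp U hUiso hUcont hφ (hgc.aestronglyMeasurable measurableSet_uIoc)
      fun τ hτ => hgM τ (hsubo hτ))
    (intervalIntegrable_apply_comp U hUiso hUcont hφ hJg'
      fun τ hτ => Jinv.le_of_opNorm_le_of_le hJinv (hg'M τ (hsubo hτ)))
    (fun τ hτ => (hUiso _ _).trans_le (Jinv.le_of_opNorm_le_of_le hJinv (hgM τ (hsub hτ))))
    (fun τ hτ => (hUiso _ _).trans_le (Jinv.le_of_opNorm_le_of_le hJinv (hg'M τ (hsubo hτ))))
  have hC₀M₁ : 0 ≤ C₀ * M₁ :=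
    mul_nonneg ((norm_nonneg _).trans hJinv) ((norm_nonneg _).trans (hg'M t ⟨ht₀, htT⟩))
  have hlen : |t - t₀| ≤ T := by rw [abs_of_nonneg (sub_nonneg.2 ht₀)]; linarith
  calc ‖∫ τ in t₀..t, U ((t - τ) / ε) (g τ)‖
      ≤ ε * (2 * (C₀ * M₀) + C₀ * M₁ * |t - t₀|) := hbound
    _ ≤ ε * (2 * (C₀ * M₀) + C₀ * M₁ * T) := by gcongr
    _ = ε * C₀ * (2 * M₀ + T * M₁) := by ring

/-- Integration by parts against the fast unitary group: if `J` is anti-self-adjoint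
with bounded inverse `Jinv` (`‖Jinv‖ ≤ C₀`), `U` denotes the unitary group generated
by `J` (encoded by the group laws, the isometry property, the generator relation
`d/ds U(s) J⁻¹ y = U(s) y` and the commutation of `J⁻¹` with the group), and
`g` is `C¹` on `[t₀, t₀+T]` with `‖g‖ ≤ M₀`, `‖g'‖ ≤ M₁`, then
`‖∫_{t₀}^{t} e^{((t-τ)/ε)J} g(τ) dτ‖ ≤ ε C₀ (2M₀ + T M₁)`. -/
theorem oscillatory_forcing_bound
    {Y : Type*} [NormedAddCommGroup Y] [NormedSpace ℝ Y] [CompleteSpace Y]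
    (U : ℝ → Y →L[ℝ] Y) (Jinv : Y →L[ℝ] Y)
    (C₀ M₀ M₁ T t₀ ε : ℝ) (hε : 0 < ε) (hT : 0 ≤ T)
    (hU0 : U 0 = ContinuousLinearMap.id ℝ Y)
    (hUgrp : ∀ s t : ℝ, U (s + t) = (U s).comp (U t))
    (hUiso : ∀ (s : ℝ) (y : Y), ‖U s y‖ = ‖y‖)
    (hUcont : ∀ y : Y, Continuous fun s : ℝ => U s y)
    (hgen : ∀ (y : Y) (s : ℝ), HasDerivAt (fun s : ℝ => U s (Jinv y)) (U s y) s)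
    (hcomm : ∀ (s : ℝ) (y : Y), U s (Jinv y) = Jinv (U s y))
    (hJinv : ‖Jinv‖ ≤ C₀)
    (g g' : ℝ → Y)
    (hg : ∀ t ∈ Set.Icc t₀ (t₀ + T), HasDerivAt g (g' t) t)
    (hgM : ∀ t ∈ Set.Icc t₀ (t₀ + T), ‖g t‖ ≤ M₀)
    (hg'M : ∀ t ∈ Set.Icc t₀ (t₀ + T), ‖g' t‖ ≤ M₁) :
    ∀ t ∈ Set.Icc t₀ (t₀ + T),
      ‖∫ τ in t₀..t, U ((t - τ) / ε) (g τ)‖ ≤ ε * C₀ * (2 * M₀ + T * M₁) :=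
  oscillatory_forcing_bound_general U Jinv C₀ M₀ M₁ T t₀ ε hε hUiso hUcont hgen hJinv g g' hg hgM
    hg'M
end

section
/- Let A be an n×n matrix, J an invertible antisymmetric m×m matrix with |J^{-1}| ≤ C₀, and B : ℝ → ℝ^{m×n} a C¹ matrix-valued function with |B(t)|, |B'(t)| ≤ M. Let E(t,s) be the evolution operator of ẏ = (J/ε + a(t))y with |a(t)| ≤ C₀, and let δx : [t₀, t₀+T] → ℝ^n satisfy |δx(t)|, |δẋ(t)| ≤ R. Then for t ∈ [t₀, t₀+T]: |∫_{t₀}^t E(t,τ) B(τ) δx(τ) dτ| ≤ C' ε, where C' depends only on C₀, M, R, T (not on ε). -/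
/-!
Write `L τ = ε⁻¹ J + a τ`. Since `J` is skew, `⟪y, L τ y⟫ = ⟪y, a τ y⟫`, so `‖E t s y‖²` grows
at rate at most `2 C₀` in either time direction: `‖E t s‖ ≤ exp (C₀ |t - s|)` uniformly in `ε`.
The same energy estimate gives uniqueness, hence the cocycle law `E t s * E s r = E t r`; so
`E s t` inverts `E t s` and `∂ₛ E t s = -E t s * L s`. With `B δx = J h`, `h = J⁻¹ B δx`,
`E t τ (J h) = ε (E t τ (L τ h) - E t τ (a τ h)) = ε (E t τ h' - E t τ (a τ h) - ∂_τ (E t τ h))`,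
and every term on the right is bounded independently of `ε`.
-/

open scoped RealInnerProductSpace
open Real Set MeasureTheory

theorem hasDerivAt_of_forall_hasDerivAt_apply {𝕜 E F : Type*} [NontriviallyNormedField 𝕜]
    [CompleteSpace 𝕜] [NormedAddCommGroup E] [NormedSpace 𝕜 E] [FiniteDimensional 𝕜 E]
    [NormedAddCommGroup F] [NormedSpace 𝕜 F] {f : 𝕜 → E →L[𝕜] F} {f' : E →L[𝕜] F} {x : 𝕜}
    (h : ∀ y, HasDerivAt (fun x => f x y) (f' y) x) : HasDerivAt f f' x := by
  let b := Module.finBasis 𝕜 E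
  let e : (E →L[𝕜] F) ≃L[𝕜] (Fin (Module.finrank 𝕜 E) → F) :=
    (b.equivFunL.arrowCongr (1 : F ≃L[𝕜] F)).trans (ContinuousLinearEquiv.piRing _)
  have he : ∀ T i, e T i = T (b i) := fun T i => by
    show T (b.equivFun.symm (Pi.single i 1)) = T (b i)
    simp [Module.Basis.equivFun_symm_apply, Pi.single_apply]
  have hef : HasDerivAt (fun x => e (f x)) (e f') x :=
    hasDerivAt_pi.2 fun i => by simpa only [he] using h (b i)
  simpa [Function.comp_def] using e.symm.hasFDerivAt.comp_hasDerivAt x hef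

theorem HasDerivAt.inverse_of_mul_eq_one {𝕜 R : Type*} [NontriviallyNormedField 𝕜] [NormedRing R]
    [HasSummableGeomSeries R] [NormedAlgebra 𝕜 R] {F G : 𝕜 → R} {F' : R} {x : 𝕜}
    (hF : HasDerivAt F F' x) (hGF : ∀ y, G y * F y = 1) (hFG : ∀ y, F y * G y = 1) :
    HasDerivAt G (-(G x * F' * G x)) x := by
  let u : ∀ y, Rˣ := fun y => ⟨F y, G y, hFG y, hGF y⟩
  have hG : Ring.inverse ∘ F = G := funext fun y => Ring.inverse_unit (u y)
  simpa [hG, u, mul_assoc] using (hasFDerivAt_ringInverse (u x)).comp_hasDerivAt x hF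

theorem intervalIntegrable_of_hasDerivAt_of_norm_le {E : Type*} [NormedAddCommGroup E]
    [NormedSpace ℝ E] [CompleteSpace E] {f f' : ℝ → E} {a b C : ℝ}
    (hf : ∀ x, HasDerivAt f (f' x) x) (hC : ∀ x ∈ uIcc a b, ‖f' x‖ ≤ C) :
    IntervalIntegrable f' volume a b := by
  have hf' : f' = deriv f := funext fun x => (hf x).deriv.symm
  refine (intervalIntegrable_const (c := C)).mono_fun' ?_ ?_
  · rw [hf']
    exact aestronglyMeasurable_deriv f _
  · filter_upwards [ae_restrict_mem measurableSet_uIoc] with x hx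
    exact hC x (uIoc_subset_uIcc hx)

section Energy

variable {V : Type*} [NormedAddCommGroup V] [InnerProductSpace ℝ V] {f f' : ℝ → V} {c : ℝ}

theorem norm_le_exp_mul_norm_of_inner_deriv_le (hf : ∀ t, HasDerivAt f (f' t) t)
    (hc : ∀ t, ⟪f t, f' t⟫ ≤ c * ‖f t‖ ^ 2) {s u : ℝ} (hsu : s ≤ u) :
    ‖f u‖ ≤ exp (c * (u - s)) * ‖f s‖ := by
  have hanti : Antitone fun t => exp (-(2 * c) * t) * ‖f t‖ ^ 2 := by
    refine antitone_of_hasDerivAt_nonpos (fun t => (((hasDerivAt_id t).const_mul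
      (-(2 * c))).exp).mul (hf t).norm_sq) fun t => ?_
    have hct := hc t
    have hexp := exp_pos (-(2 * c) * t)
    simp only [id, Pi.zero_apply]
    nlinarith
  have key : ‖f u‖ ^ 2 ≤ (exp (c * (u - s)) * ‖f s‖) ^ 2 := by
    have h := hanti hsu
    have e : exp (c * (u - s)) ^ 2 = exp (-(2 * c) * s) / exp (-(2 * c) * u) := by
      rw [← exp_sub, ← exp_nat_mul]; ring_nf
    rw [mul_pow, e, div_mul_eq_mul_div, le_div_iff₀ (exp_pos _)]
    linarith
  exact (pow_le_pow_iff_left₀ (norm_nonneg _) (by positivity) two_ne_zero).mp key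

theorem norm_le_exp_mul_abs_mul_norm_of_abs_inner_deriv_le (hf : ∀ t, HasDerivAt f (f' t) t)
    (hc : ∀ t, |⟪f t, f' t⟫| ≤ c * ‖f t‖ ^ 2) (s u : ℝ) :
    ‖f u‖ ≤ exp (c * |u - s|) * ‖f s‖ := by
  rcases le_total s u with hsu | hus
  · rw [abs_of_nonneg (sub_nonneg.2 hsu)]
    exact norm_le_exp_mul_norm_of_inner_deriv_le hf (fun t => (le_abs_self _).trans (hc t)) hsu
  · have hrev : ∀ t, HasDerivAt (fun t => f (-t)) (-f' (-t)) t := fun t => by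
      simpa [Function.comp_def] using (hf (-t)).scomp t (hasDerivAt_neg t)
    have := norm_le_exp_mul_norm_of_inner_deriv_le hrev
      (fun t => by simpa only [inner_neg_right] using (neg_le_abs _).trans (hc (-t)))
      (neg_le_neg hus)
    simpa [abs_of_nonpos (sub_nonpos.2 hus), neg_add_eq_sub] using this

end Energy

theorem abs_inner_smul_add_apply_le_of_skew {V : Type*} [NormedAddCommGroup V]
    [InnerProductSpace ℝ V] {J A : V →L[ℝ] V} (hJ : ∀ u v, ⟪J u, v⟫ = -⟪u, J v⟫) (r : ℝ) (y : V) :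
    |⟪y, (r • J + A) y⟫| ≤ ‖A‖ * ‖y‖ ^ 2 := by
  have hJy : ⟪y, J y⟫ = 0 := by
    have := hJ y y
    rw [real_inner_comm] at this
    linarith
  rw [add_apply, smul_apply, inner_add_right, real_inner_smul_right, hJy, mul_zero, zero_add]
  calc |⟪y, A y⟫| ≤ ‖y‖ * ‖A y‖ := abs_real_inner_le_norm _ _
    _ ≤ ‖y‖ * (‖A‖ * ‖y‖) := by gcongr; exact A.le_opNorm y
    _ = ‖A‖ * ‖y‖ ^ 2 := by ring

structure IsEvolutionOperator {V : Type*} [NormedAddCommGroup V] [NormedSpace ℝ V]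
    (L : ℝ → V →L[ℝ] V) (E : ℝ → ℝ → V →L[ℝ] V) : Prop where
  apply_self : ∀ s, E s s = ContinuousLinearMap.id ℝ V
  hasDerivAt : ∀ s y t, HasDerivAt (fun t => E t s y) (L t (E t s y)) t

namespace IsEvolutionOperator

variable {V : Type*} [NormedAddCommGroup V] [InnerProductSpace ℝ V] {L : ℝ → V →L[ℝ] V}
  {E : ℝ → ℝ → V →L[ℝ] V} {c : ℝ}

theorem norm_apply_le (hE : IsEvolutionOperator L E) (hL : ∀ t y, |⟪y, L t y⟫| ≤ c * ‖y‖ ^ 2)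
    (t s : ℝ) (y : V) : ‖E t s y‖ ≤ exp (c * |t - s|) * ‖y‖ := by
  simpa [hE.apply_self] using
    norm_le_exp_mul_abs_mul_norm_of_abs_inner_deriv_le (hE.hasDerivAt s y) (fun τ => hL τ _) s t

theorem opNorm_le (hE : IsEvolutionOperator L E) (hL : ∀ t y, |⟪y, L t y⟫| ≤ c * ‖y‖ ^ 2)
    (t s : ℝ) : ‖E t s‖ ≤ exp (c * |t - s|) :=
  ContinuousLinearMap.opNorm_le_bound _ (exp_pos _).le (hE.norm_apply_le hL t s)

theorem mul_eq (hE : IsEvolutionOperator L E) (hL : ∀ t y, |⟪y, L t y⟫| ≤ c * ‖y‖ ^ 2)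
    (t s r : ℝ) : E t s * E s r = E t r := by
  ext1 y
  have hdiff : ∀ τ, HasDerivAt (fun τ => E τ s (E s r y) - E τ r y)
      (L τ (E τ s (E s r y) - E τ r y)) τ := fun τ => by
    rw [map_sub]
    exact (hE.hasDerivAt s _ τ).sub (hE.hasDerivAt r y τ)
  have := norm_le_exp_mul_abs_mul_norm_of_abs_inner_deriv_le hdiff (fun τ => hL τ _) s t
  simp only [hE.apply_self, ContinuousLinearMap.id_apply, sub_self, norm_zero, mul_zero] at this
  exact sub_eq_zero.1 (norm_le_zero_iff.1 this)

theorem hasDerivAt_right [FiniteDimensional ℝ V] (hE : IsEvolutionOperator L E)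
    (hL : ∀ t y, |⟪y, L t y⟫| ≤ c * ‖y‖ ^ 2) (t s : ℝ) :
    HasDerivAt (fun s => E t s) (-(E t s * L s)) s := by
  have hF : HasDerivAt (fun s => E s t) (L s * E s t) s :=
    hasDerivAt_of_forall_hasDerivAt_apply (hE.hasDerivAt t · s)
  have h := hF.inverse_of_mul_eq_one (G := fun s => E t s)
    (fun r => by rw [hE.mul_eq hL, hE.apply_self]; rfl)
    (fun r => by rw [hE.mul_eq hL, hE.apply_self]; rfl)
  rwa [mul_assoc, mul_assoc, hE.mul_eq hL, hE.apply_self, ← mul_assoc] at h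

end IsEvolutionOperator

theorem norm_oscillatory_integral_le {V : Type*} [NormedAddCommGroup V]
    [NormedSpace ℝ V] [CompleteSpace V] {G a : ℝ → V →L[ℝ] V} {J : V →L[ℝ] V}
    {h h' : ℝ → V} {ε C₀ K P Q t₀ t : ℝ} (hε : 0 < ε)
    (hG : ∀ τ, HasDerivAt G (-(G τ * (ε⁻¹ • J + a τ))) τ) (hGK : ∀ τ ∈ uIcc t₀ t, ‖G τ‖ ≤ K)
    (ha : ∀ τ, ‖a τ‖ ≤ C₀) (hh : ∀ τ, HasDerivAt h (h' τ) τ) (hP : ∀ τ, ‖h τ‖ ≤ P)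
    (hQ : ∀ τ, ‖h' τ‖ ≤ Q) :
    ‖∫ τ in t₀..t, G τ (J (h τ))‖ ≤ ε * (K * (Q + C₀ * P) * |t - t₀| + 2 * K * P) := by
  have hK : 0 ≤ K := (norm_nonneg _).trans (hGK t₀ left_mem_uIcc)
  have hC₀ : 0 ≤ C₀ := (norm_nonneg _).trans (ha t₀)
  have hG_bound : ∀ τ ∈ uIcc t₀ t, ∀ {y : V} {r : ℝ}, ‖y‖ ≤ r → ‖G τ y‖ ≤ K * r :=
    fun τ hτ y r hy => ((G τ).le_of_opNorm_le (hGK τ hτ) y).trans (by gcongr)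
  set φ' := fun τ => -(G τ * (ε⁻¹ • J + a τ)) (h τ) + G τ (h' τ)
  have hφ : ∀ τ, HasDerivAt (fun τ => G τ (h τ)) (φ' τ) τ := fun τ => (hG τ).clm_apply (hh τ)
  set ψ := fun τ => G τ (h' τ) - G τ (a τ (h τ))
  have hψ : ∀ τ, ψ τ = ε⁻¹ • G τ (J (h τ)) + φ' τ := fun τ => by
    simp only [mul_apply_eq_comp, add_apply, smul_apply, map_add, map_smul, neg_add_rev, ψ, φ']
    abel
  have hψ_bound : ∀ τ ∈ uIcc t₀ t, ‖ψ τ‖ ≤ K * (Q + C₀ * P) := fun τ hτ => by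
    rw [mul_add]
    exact (norm_sub_le _ _).trans (add_le_add (hG_bound τ hτ (hQ τ))
      (hG_bound τ hτ ((a τ).le_of_opNorm_le_of_le (ha τ) (hP τ))))
  have hG_cont : Continuous G := continuous_iff_continuousAt.2 fun τ => (hG τ).continuousAt
  have hGJh : IntervalIntegrable (fun τ => G τ (J (h τ))) volume t₀ t :=
    (hG_cont.clm_apply (J.continuous.comp
      (continuous_iff_continuousAt.2 fun τ => (hh τ).continuousAt))).intervalIntegrable _ _
  have hφ' : IntervalIntegrable φ' volume t₀ t := by
    refine intervalIntegrable_of_hasDerivAt_of_norm_le hφ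
      (C := K * (Q + C₀ * P) + ε⁻¹ * (K * (‖J‖ * P))) fun τ hτ => ?_
    rw [show φ' τ = ψ τ - ε⁻¹ • G τ (J (h τ)) by rw [hψ]; abel]
    refine (norm_sub_le _ _).trans (add_le_add (hψ_bound τ hτ) ?_)
    rw [norm_smul, norm_inv, norm_of_nonneg hε.le]
    gcongr
    exact hG_bound τ hτ (J.le_opNorm_of_le (hP τ))
  have hψ' : IntervalIntegrable ψ volume t₀ t := by
    rw [funext hψ]
    exact (hGJh.smul ε⁻¹).add hφ'
  have hsplit : ∫ τ in t₀..t, G τ (J (h τ)) =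
      ε • ((∫ τ in t₀..t, ψ τ) - (G t (h t) - G t₀ (h t₀))) := by
    rw [← intervalIntegral.integral_eq_sub_of_hasDerivAt (fun τ _ => hφ τ) hφ',
      ← intervalIntegral.integral_sub hψ' hφ', ← intervalIntegral.integral_smul]
    refine intervalIntegral.integral_congr fun τ _ => ?_
    simp only [hψ, add_sub_cancel_right, smul_smul, mul_inv_cancel₀ hε.ne', one_smul]
  rw [hsplit, norm_smul, norm_of_nonneg hε.le]
  gcongr
  refine (norm_sub_le _ _).trans ?_
  gcongr
  · exact intervalIntegral.norm_integral_le_of_norm_le_const fun τ hτ =>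
      hψ_bound τ (uIoc_subset_uIcc hτ)
  · rw [two_mul, add_mul]
    exact (norm_sub_le _ _).trans (add_le_add (hG_bound t right_mem_uIcc (hP t))
      (hG_bound t₀ left_mem_uIcc (hP t₀)))

theorem oscillatory_evolution_integral_estimate_general
    (n m : ℕ) (C₀ M R T t₀ : ℝ) :
    ∃ C' : ℝ, ∀ ε : ℝ, 0 < ε →
      ∀ J : EuclideanSpace ℝ (Fin m) ≃L[ℝ] EuclideanSpace ℝ (Fin m),
        (∀ u v : EuclideanSpace ℝ (Fin m), ⟪J u, v⟫ = -⟪u, J v⟫) →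
        ‖(J.symm : EuclideanSpace ℝ (Fin m) →L[ℝ] EuclideanSpace ℝ (Fin m))‖ ≤ C₀ →
      ∀ a : ℝ → (EuclideanSpace ℝ (Fin m) →L[ℝ] EuclideanSpace ℝ (Fin m)),
        (∀ t, ‖a t‖ ≤ C₀) →
      ∀ E : ℝ → ℝ → (EuclideanSpace ℝ (Fin m) →L[ℝ] EuclideanSpace ℝ (Fin m)),
        (∀ s, E s s = ContinuousLinearMap.id ℝ (EuclideanSpace ℝ (Fin m))) →
        (∀ (s : ℝ) (y : EuclideanSpace ℝ (Fin m)) (t : ℝ),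
          HasDerivAt (fun t : ℝ => E t s y) (ε⁻¹ • J (E t s y) + a t (E t s y)) t) →
      ∀ B B' : ℝ → (EuclideanSpace ℝ (Fin n) →L[ℝ] EuclideanSpace ℝ (Fin m)),
        (∀ t, HasDerivAt B (B' t) t) → (∀ t, ‖B t‖ ≤ M) → (∀ t, ‖B' t‖ ≤ M) →
      ∀ δx δx' : ℝ → EuclideanSpace ℝ (Fin n),
        (∀ t, HasDerivAt δx (δx' t) t) → (∀ t, ‖δx t‖ ≤ R) → (∀ t, ‖δx' t‖ ≤ R) →
      ∀ t ∈ Set.Icc t₀ (t₀ + T),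
        ‖∫ τ in t₀..t, E t τ (B τ (δx τ))‖ ≤ C' * ε := by
  set K := exp (C₀ * T)
  set P := C₀ * (M * R)
  set Q := C₀ * (M * R + M * R)
  refine ⟨K * (Q + C₀ * P) * T + 2 * K * P, ?_⟩
  intro ε hε J hJ hJinv a ha E hEid hEderiv B B' hB hBM hB'M δx δx' hδx hδxR hδx'R t ht
  have hC₀ : 0 ≤ C₀ := (norm_nonneg _).trans (ha t)
  have hM : 0 ≤ M := (norm_nonneg _).trans (hBM t)
  have hR : 0 ≤ R := (norm_nonneg _).trans (hδxR t)
  have htT : |t - t₀| ≤ T := by rw [abs_of_nonneg (by linarith [ht.1])]; linarith [ht.2]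
  let L : ℝ → EuclideanSpace ℝ (Fin m) →L[ℝ] EuclideanSpace ℝ (Fin m) :=
    fun τ => ε⁻¹ • (J : EuclideanSpace ℝ (Fin m) →L[ℝ] EuclideanSpace ℝ (Fin m)) + a τ
  have hE : IsEvolutionOperator L E := ⟨hEid, hEderiv⟩
  have hL : ∀ τ y, |⟪y, L τ y⟫| ≤ C₀ * ‖y‖ ^ 2 := fun τ y =>
    (abs_inner_smul_add_apply_le_of_skew hJ _ y).trans (by gcongr; exact ha τ)
  have hK : ∀ τ ∈ uIcc t₀ t, ‖E t τ‖ ≤ K := fun τ hτ =>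
    (hE.opNorm_le hL t τ).trans <| exp_le_exp.2 <| by
      gcongr; exact (abs_sub_right_of_mem_uIcc hτ).trans htT
  have hh : ∀ τ, HasDerivAt (fun τ => J.symm (B τ (δx τ)))
      (J.symm (B' τ (δx τ) + B τ (δx' τ))) τ := fun τ =>
    J.symm.hasFDerivAt.comp_hasDerivAt τ ((hB τ).clm_apply (hδx τ))
  have hP : ∀ τ, ‖J.symm (B τ (δx τ))‖ ≤ P := fun τ =>
    ContinuousLinearMap.le_of_opNorm_le_of_le _ hJinv
      ((B τ).le_of_opNorm_le_of_le (hBM τ) (hδxR τ))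
  have hQ : ∀ τ, ‖J.symm (B' τ (δx τ) + B τ (δx' τ))‖ ≤ Q := fun τ =>
    ContinuousLinearMap.le_of_opNorm_le_of_le _ hJinv <| (norm_add_le _ _).trans <| add_le_add
      ((B' τ).le_of_opNorm_le_of_le (hB'M τ) (hδxR τ))
      ((B τ).le_of_opNorm_le_of_le (hBM τ) (hδx'R τ))
  have key := norm_oscillatory_integral_le hε (hE.hasDerivAt_right hL t) hK ha hh hP hQ
  simp only [ContinuousLinearEquiv.coe_coe, ContinuousLinearEquiv.apply_symm_apply] at key
  calc _ ≤ ε * (K * (Q + C₀ * P) * |t - t₀| + 2 * K * P) := key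
    _ ≤ ε * (K * (Q + C₀ * P) * T + 2 * K * P) := by gcongr
    _ = _ := by ring

/-- Key oscillatory-integral estimate: if `E(t,s)` is the evolution operator of
`ẏ = (J/ε + a(t)) y` with `J` invertible antisymmetric (`|J⁻¹| ≤ C₀`), `|a| ≤ C₀`,
`B` is `C¹` with `|B|, |B'| ≤ M`, and `δx` is `C¹` with `|δx|, |δẋ| ≤ R`, then
`‖∫_{t₀}^t E(t,τ) B(τ) δx(τ) dτ‖ ≤ C' ε` on `[t₀, t₀+T]`, with `C'` depending only
on `C₀, M, R, T` and not on `ε`. -/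
theorem oscillatory_evolution_integral_estimate
    (n m : ℕ) (C₀ M R T t₀ : ℝ) (hT : 0 ≤ T) (hC₀ : 0 ≤ C₀) (hM : 0 ≤ M) (hR : 0 ≤ R) :
    ∃ C' : ℝ, ∀ ε : ℝ, 0 < ε →
      ∀ J : EuclideanSpace ℝ (Fin m) ≃L[ℝ] EuclideanSpace ℝ (Fin m),
        (∀ u v : EuclideanSpace ℝ (Fin m), ⟪J u, v⟫ = -⟪u, J v⟫) →
        ‖(J.symm : EuclideanSpace ℝ (Fin m) →L[ℝ] EuclideanSpace ℝ (Fin m))‖ ≤ C₀ →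
      ∀ a : ℝ → (EuclideanSpace ℝ (Fin m) →L[ℝ] EuclideanSpace ℝ (Fin m)),
        (∀ t, ‖a t‖ ≤ C₀) →
      ∀ E : ℝ → ℝ → (EuclideanSpace ℝ (Fin m) →L[ℝ] EuclideanSpace ℝ (Fin m)),
        (∀ s, E s s = ContinuousLinearMap.id ℝ (EuclideanSpace ℝ (Fin m))) →
        (∀ (s : ℝ) (y : EuclideanSpace ℝ (Fin m)) (t : ℝ),
          HasDerivAt (fun t : ℝ => E t s y) (ε⁻¹ • J (E t s y) + a t (E t s y)) t) →
      ∀ B B' : ℝ → (EuclideanSpace ℝ (Fin n) →L[ℝ] EuclideanSpace ℝ (Fin m)),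
        (∀ t, HasDerivAt B (B' t) t) → (∀ t, ‖B t‖ ≤ M) → (∀ t, ‖B' t‖ ≤ M) →
      ∀ δx δx' : ℝ → EuclideanSpace ℝ (Fin n),
        (∀ t, HasDerivAt δx (δx' t) t) → (∀ t, ‖δx t‖ ≤ R) → (∀ t, ‖δx' t‖ ≤ R) →
      ∀ t ∈ Set.Icc t₀ (t₀ + T),
        ‖∫ τ in t₀..t, E t τ (B τ (δx τ))‖ ≤ C' * ε :=
  oscillatory_evolution_integral_estimate_general n m C₀ M R T t₀
end

section
/- (Block diagonalization, bounded case.) Let X, Y be Banach spaces, A ∈ L(X), J an anti-self-adjoint operator on the Hilbert space Y with bounded inverse, and let B₁ ∈ L(X,Y), B₂ ∈ L(Y,X), a ∈ L(X), b ∈ L(Y) be bounded operators. Consider the pair of quadratic operator equations (J + εb) L₁ - ε L₁ (A + a + B₂ L₁) + ε B₁ = 0 and L₂(ε B₁ L₂ + J + ε b) - ε(A+a) L₂ - ε B₂ = 0 for (L₁, L₂) ∈ L(X,Y) × L(Y,X). Then there exists ε₀ > 0 such that for every ε ∈ [0, ε₀) these equations have a unique small solution (L₁^ε, L₂^ε)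 with ‖L₁^ε‖ + ‖L₂^ε‖ ≤ C ε, depending continuously on ε, with (L₁⁰, L₂⁰) = (0,0). -/
/-!
The pair of left-hand sides, `decouplingMap (ε, L₁, L₂)`, is polynomial in `(ε, L₁, L₂)`, vanishes
at the origin, and at `ε = 0` it is the linear map `(L₁, L₂) ↦ (J L₁, L₂ J)`, which is invertible
because `J` is. So its partial derivative in `(L₁, L₂)` at the origin is invertible, and the implicit
function theorem gives a `C¹` solution curve `ε ↦ L^ε` through `0`, unique near the origin.
Differentiability at `0` gives `‖L^ε‖ = O(ε)`.
-/

open ContinuousLinearMap Filter Metric Topology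

section PartialDerivative

variable {𝕜 P E F : Type*} [NontriviallyNormedField 𝕜]
  [NormedAddCommGroup P] [NormedSpace 𝕜 P] [NormedAddCommGroup E] [NormedSpace 𝕜 E]
  [NormedAddCommGroup F] [NormedSpace 𝕜 F]

theorem fderiv_comp_inr_eq_of_hasFDerivAt_slice {f : P × E → F} {u : P × E} {T : E →L[𝕜] F}
    (hf : DifferentiableAt 𝕜 f u) (hT : HasFDerivAt (fun y => f (u.1, y)) T u.2) :
    fderiv 𝕜 f u ∘L inr 𝕜 P E = T :=
  (hf.hasFDerivAt.comp u.2 ((hasFDerivAt_const u.1 u.2).prodMk (hasFDerivAt_id u.2))).unique hT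

end PartialDerivative

section ImplicitCurve

variable {𝕜 P E F : Type*} [RCLike 𝕜]
  [NormedAddCommGroup P] [NormedSpace 𝕜 P] [CompleteSpace P]
  [NormedAddCommGroup E] [NormedSpace 𝕜 E] [CompleteSpace E]
  [NormedAddCommGroup F] [NormedSpace 𝕜 F] [CompleteSpace F]

theorem ContDiffAt.exists_local_solution_curve {f : P × E → F} (hf : ContDiffAt 𝕜 1 f 0)
    (hf0 : f 0 = 0) (hinv : (fderiv 𝕜 f 0 ∘L inr 𝕜 P E).IsInvertible) :
    ∃ r > 0, ∃ C : ℝ, ∃ ψ : P → E, ContinuousOn ψ (ball 0 r) ∧ ψ 0 = 0 ∧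
      (∀ p ∈ ball 0 r, f (p, ψ p) = 0 ∧ ‖ψ p‖ ≤ C * ‖p‖) ∧
      ∀ p y, ‖p‖ < r → ‖y‖ < r → f (p, y) = 0 → y = ψ p := by
  set ψ := hf.implicitFunction one_ne_zero hinv
  have hψ0 : ψ 0 = 0 := hf.implicitFunction_apply_self one_ne_zero hinv
  obtain ⟨C, hC⟩ :=
    (hf.hasStrictFDerivAt_implicitFunction one_ne_zero hinv).hasFDerivAt.isBigO_sub.bound
  have hcurve : ∀ᶠ p in 𝓝 (0 : P), ContinuousAt ψ p ∧ f (p, ψ p) = 0 ∧ ‖ψ p‖ ≤ C * ‖p‖ := by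
    filter_upwards [(hf.contDiffAt_implicitFunction one_ne_zero hinv).eventually (by simp),
      hf.eventually_apply_implicitFunction one_ne_zero hinv, hC] with p hcont hsol hbound
    have hbound : ‖ψ p - ψ 0‖ ≤ C * ‖p - 0‖ := hbound
    exact ⟨hcont.continuousAt, by simpa [hf0] using hsol, by simpa [hψ0] using hbound⟩
  have hunique : ∀ᶠ v in 𝓝 (0 : P × E), f v = 0 → ψ v.1 = v.2 := by
    filter_upwards [hf.eventually_apply_eq_iff_implicitFunction one_ne_zero hinv] with v hv
    simpa [hf0] using hv.1
  obtain ⟨r₁, hr₁, hball₁⟩ := eventually_nhds_iff_ball.1 hcurve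
  obtain ⟨r₂, hr₂, hball₂⟩ := eventually_nhds_iff_ball.1 hunique
  refine ⟨min r₁ r₂, lt_min hr₁ hr₂, C, ψ, fun p hp => ?_, hψ0, fun p hp => ?_, ?_⟩
  · exact (hball₁ p (ball_subset_ball (min_le_left _ _) hp)).1.continuousWithinAt
  · exact (hball₁ p (ball_subset_ball (min_le_left _ _) hp)).2
  · intro p y hp hy hfy
    refine (hball₂ (p, y) ?_ hfy).symm
    rw [mem_ball_zero_iff, Prod.norm_def]
    exact max_lt (hp.trans_le (min_le_right _ _)) (hy.trans_le (min_le_right _ _))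

end ImplicitCurve

section Decoupling

variable {X Y : Type*} [NormedAddCommGroup X] [NormedSpace ℝ X]
  [NormedAddCommGroup Y] [NormedSpace ℝ Y]

noncomputable def decouplingMap (A a : X →L[ℝ] X) (J : Y ≃L[ℝ] Y) (B₁ : X →L[ℝ] Y)
    (B₂ : Y →L[ℝ] X) (b : Y →L[ℝ] Y) :
    ℝ × ((X →L[ℝ] Y) × (Y →L[ℝ] X)) → (X →L[ℝ] Y) × (Y →L[ℝ] X) := fun ⟨ε, L₁, L₂⟩ =>
  (((J : Y →L[ℝ] Y) + ε • b).comp L₁ - ε • (L₁.comp (A + a + B₂.comp L₁)) + ε • B₁,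
   L₂.comp (ε • B₁.comp L₂ + (J : Y →L[ℝ] Y) + ε • b) - ε • ((A + a).comp L₂) - ε • B₂)

variable (A a : X →L[ℝ] X) (J : Y ≃L[ℝ] Y) (B₁ : X →L[ℝ] Y) (B₂ : Y →L[ℝ] X) (b : Y →L[ℝ] Y)

theorem contDiff_decouplingMap : ContDiff ℝ 1 (decouplingMap A a J B₁ B₂ b) := by
  unfold decouplingMap
  fun_prop

theorem decouplingMap_zero_left (L : (X →L[ℝ] Y) × (Y →L[ℝ] X)) :
    decouplingMap A a J B₁ B₂ b (0, L) =
      ((ContinuousLinearEquiv.refl ℝ X).arrowCongr J).prodCongr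
        (J.symm.arrowCongr (ContinuousLinearEquiv.refl ℝ X)) L := by
  ext x <;> simp [decouplingMap]

end Decoupling

open scoped RealInnerProductSpace


theorem block_diagonalization_bounded_general
    {X Y : Type*} [NormedAddCommGroup X] [NormedSpace ℝ X] [CompleteSpace X]
    [NormedAddCommGroup Y] [InnerProductSpace ℝ Y] [CompleteSpace Y]
    (A a : X →L[ℝ] X) (J : Y ≃L[ℝ] Y)
    (B₁ : X →L[ℝ] Y) (B₂ : Y →L[ℝ] X) (b : Y →L[ℝ] Y) :
    ∃ ε₀ > (0:ℝ), ∃ C : ℝ, ∃ L : ℝ → (X →L[ℝ] Y) × (Y →L[ℝ] X),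
      ContinuousOn L (Set.Ico 0 ε₀) ∧ L 0 = 0 ∧
      (∀ ε ∈ Set.Ico (0:ℝ) ε₀,
        ((J : Y →L[ℝ] Y) + ε • b).comp (L ε).1
            - ε • ((L ε).1.comp (A + a + B₂.comp (L ε).1)) + ε • B₁ = 0 ∧
        (L ε).2.comp (ε • B₁.comp (L ε).2 + (J : Y →L[ℝ] Y) + ε • b)
            - ε • ((A + a).comp (L ε).2) - ε • B₂ = 0 ∧
        ‖(L ε).1‖ + ‖(L ε).2‖ ≤ C * ε) ∧
      ∃ δ > (0:ℝ), ∀ ε ∈ Set.Ico (0:ℝ) ε₀,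
        ∀ (L₁ : X →L[ℝ] Y) (L₂ : Y →L[ℝ] X), ‖L₁‖ ≤ δ → ‖L₂‖ ≤ δ →
          ((J : Y →L[ℝ] Y) + ε • b).comp L₁
              - ε • (L₁.comp (A + a + B₂.comp L₁)) + ε • B₁ = 0 →
          L₂.comp (ε • B₁.comp L₂ + (J : Y →L[ℝ] Y) + ε • b)
              - ε • ((A + a).comp L₂) - ε • B₂ = 0 →
          (L₁, L₂) = L ε := by
  set F := decouplingMap A a J B₁ B₂ b
  have hF : ContDiffAt ℝ 1 F 0 := (contDiff_decouplingMap A a J B₁ B₂ b).contDiffAt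
  set T := ((ContinuousLinearEquiv.refl ℝ X).arrowCongr J).prodCongr
    (J.symm.arrowCongr (ContinuousLinearEquiv.refl ℝ X))
  have hpartial : fderiv ℝ F 0 ∘L inr ℝ ℝ _ = T :=
    fderiv_comp_inr_eq_of_hasFDerivAt_slice (hF.differentiableAt one_ne_zero) (by
      convert T.hasFDerivAt using 1
      exact funext (decouplingMap_zero_left A a J B₁ B₂ b))
  obtain ⟨r, hr, C, L, hcont, hL0, hsol, hunique⟩ :=
    hF.exists_local_solution_curve (by simp [F, decouplingMap]) ⟨_, hpartial.symm⟩
  have hIco : Set.Ico 0 r ⊆ ball (0 : ℝ) r := fun ε hε => by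
    simpa [abs_of_nonneg hε.1] using hε.2
  refine ⟨r, hr, 2 * C, L, hcont.mono hIco, hL0, fun ε hε => ?_, r / 2, half_pos hr,
    fun ε hε L₁ L₂ h₁ h₂ e₁ e₂ => hunique ε _ (mem_ball_zero_iff.1 (hIco hε)) ?_ (Prod.ext e₁ e₂)⟩
  · obtain ⟨hzero, hbound⟩ := hsol ε (hIco hε)
    refine ⟨congrArg Prod.fst hzero, congrArg Prod.snd hzero, ?_⟩
    have hfst := norm_fst_le (L ε)
    have hsnd := norm_snd_le (L ε)
    rw [Real.norm_of_nonneg hε.1] at hbound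
    linarith
  · rw [Prod.norm_def]
    exact max_lt (by linarith) (by linarith)

/-- Block diagonalization, bounded case (Lemma 7.1): the quadratic operator equations
`(J + εb)L₁ - εL₁(A + a + B₂L₁) + εB₁ = 0` and
`L₂(εB₁L₂ + J + εb) - ε(A+a)L₂ - εB₂ = 0` admit, for `ε ∈ [0, ε₀)`, a unique small
solution `(L₁^ε, L₂^ε)` with `‖L₁^ε‖ + ‖L₂^ε‖ ≤ Cε`, depending continuously on `ε`,
with `(L₁⁰, L₂⁰) = (0,0)`. -/
theorem block_diagonalization_bounded
    {X Y : Type*} [NormedAddCommGroup X] [NormedSpace ℝ X] [CompleteSpace X]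
    [NormedAddCommGroup Y] [InnerProductSpace ℝ Y] [CompleteSpace Y]
    (A a : X →L[ℝ] X) (J : Y ≃L[ℝ] Y)
    (hJ : ∀ u v : Y, ⟪J u, v⟫ = -⟪u, J v⟫)
    (B₁ : X →L[ℝ] Y) (B₂ : Y →L[ℝ] X) (b : Y →L[ℝ] Y) :
    ∃ ε₀ > (0:ℝ), ∃ C : ℝ, ∃ L : ℝ → (X →L[ℝ] Y) × (Y →L[ℝ] X),
      ContinuousOn L (Set.Ico 0 ε₀) ∧ L 0 = 0 ∧
      (∀ ε ∈ Set.Ico (0:ℝ) ε₀,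
        ((J : Y →L[ℝ] Y) + ε • b).comp (L ε).1
            - ε • ((L ε).1.comp (A + a + B₂.comp (L ε).1)) + ε • B₁ = 0 ∧
        (L ε).2.comp (ε • B₁.comp (L ε).2 + (J : Y →L[ℝ] Y) + ε • b)
            - ε • ((A + a).comp (L ε).2) - ε • B₂ = 0 ∧
        ‖(L ε).1‖ + ‖(L ε).2‖ ≤ C * ε) ∧
      ∃ δ > (0:ℝ), ∀ ε ∈ Set.Ico (0:ℝ) ε₀,
        ∀ (L₁ : X →L[ℝ] Y) (L₂ : Y →L[ℝ] X), ‖L₁‖ ≤ δ → ‖L₂‖ ≤ δ →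
          ((J : Y →L[ℝ] Y) + ε • b).comp L₁
              - ε • (L₁.comp (A + a + B₂.comp L₁)) + ε • B₁ = 0 →
          L₂.comp (ε • B₁.comp L₂ + (J : Y →L[ℝ] Y) + ε • b)
              - ε • ((A + a).comp L₂) - ε • B₂ = 0 →
          (L₁, L₂) = L ε :=
  block_diagonalization_bounded_general A a J B₁ B₂ b
end

section
/- (Positivity of the energy on the center manifold.) Let H(ξ_c, u) = H₀(ξ_c) + H₁(ξ_c)·u + H₂(ξ_c)(u,u) + H₃(ξ_c, u), where H₀(0) = 0, DH₀(0) = 0, D²H₀(0)(ξ,ξ) ≥ c₀|ξ|², |H₁(ξ_c)| ≤ (c₁ + C'|ξ_c|)|ξ_c|, H₂(ξ_c)(u,u) ≥ (c₂ - C'|ξ_c|)|u|², H₃(ξ_c,0) = 0, D_u H₃(ξ_c, 0) = 0, |D²H₃| ≤ C₀ε, and c₀ c₂ - c₁² > 0. Then there exist r > 0 and c* > 0 and ε₀ > 0 such that for all ε ∈ [0, ε₀), H(ξ_c, u) ≥ c*(|ξ_c|² + |u|²) for all |ξ_c| ≤ r, |u| ≤ b; in particular H > 0 on this neighborhood except at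 the origin. -/
/-!
Up to errors that are small near the origin, `H` dominates the quadratic form
`q(s, t) = c₀/2 s² - c₁ s t + c₂ t²` in `s = |ξ|`, `t = |u|`, which is positive definite since
`c₁² < 2 c₀ c₂`; the identity `4(a + c)(a s² + b s t + c t²) - (4ac - b²)(s² + t²) =
(2as + bt)² + (2ct + bs)²` gives an explicit lower bound `q ≥ 4e (s² + t²)`. The errors are the
second-order Taylor remainder of `H₀`, which is `o(|ξ|²)`; the `C'|ξ|` corrections to `H₁` and `H₂`;
and `H₃`, which by the mean value theorem is at most `C₀ ε |u|²`. Shrinking `r` and `ε₀` makes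
each of them at most `e` times `|ξ|²`, `|ξ||u|` or `|u|²`, leaving `H ≥ e (|ξ|² + |u|²)`.
-/

open Filter Topology Asymptotics Metric Set

theorem neg_discrim_div_mul_sq_add_sq_le {a c : ℝ} (b : ℝ) (hac : 0 < a + c) (s t : ℝ) :
    -discrim a b c / (4 * (a + c)) * (s ^ 2 + t ^ 2) ≤ a * s ^ 2 + b * s * t + c * t ^ 2 := by
  have sum_of_squares : 4 * (a + c) * (a * s ^ 2 + b * s * t + c * t ^ 2) + discrim a b c * (s ^ 2 + t ^ 2)
      = (2 * a * s + b * t) ^ 2 + (2 * c * t + b * s) ^ 2 := by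
    unfold discrim; ring
  rw [div_mul_eq_mul_div, div_le_iff₀ (by positivity)]
  linarith [sq_nonneg (2 * a * s + b * t), sq_nonneg (2 * c * t + b * s)]

section

variable {E F : Type*} [NormedAddCommGroup E] [NormedSpace ℝ E]
  [NormedAddCommGroup F] [NormedSpace ℝ F]

theorem isLittleO_sub_taylor_two {f : E → F} {f' : E → E →L[ℝ] F}
    {f'' : E →L[ℝ] E →L[ℝ] F} {x : E}
    (hf : ∀ᶠ y in 𝓝 x, HasFDerivAt f (f' y) y) (hf' : HasFDerivAt f' f'' x) :
    (fun h => f (x + h) - f x - f' x h - (2 : ℝ)⁻¹ • f'' h h) =o[𝓝 0] fun h => ‖h‖ ^ 2 := by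
  refine isLittleO_iff.2 fun δ hδ => ?_
  obtain ⟨ρ, hρ, hball⟩ := eventually_nhds_iff_ball.1 (hf.and (hf'.isLittleO.bound hδ))
  filter_upwards [ball_mem_nhds (0 : E) hρ] with h hh
  rw [mem_ball_zero_iff] at hh
  have hseg : ∀ t ∈ Icc (0 : ℝ) 1, x + t • h ∈ ball x ρ := fun t ht => by
    rw [mem_ball_iff_norm, add_sub_cancel_left, norm_smul, Real.norm_of_nonneg ht.1]
    exact (mul_le_of_le_one_left (norm_nonneg h) ht.2).trans_lt hh
  let g : ℝ → F := fun t => f (x + t • h) - t • f' x h - (t ^ 2 / 2) • f'' h h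
  have hg : ∀ t ∈ Icc (0 : ℝ) 1, HasDerivWithinAt g
      ((f' (x + t • h) - f' x - f'' (t • h)) h) (Icc 0 1) t := fun t ht => by
    have hline : HasDerivAt (fun t : ℝ => x + t • h) h t := by
      simpa using ((hasDerivAt_id t).smul_const h).const_add x
    have hquad : HasDerivAt (fun t : ℝ => t ^ 2 / 2) t t := by
      simpa using (hasDerivAt_pow 2 t).div_const 2
    have := (((hball _ (hseg t ht)).1.comp_hasDerivAt t hline).sub
      ((hasDerivAt_id t).smul_const (f' x h))).sub (hquad.smul_const (f'' h h))
    convert this.hasDerivWithinAt using 1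
    · rfl
    · simp only [map_smul, sub_apply, smul_apply, one_smul]
  have hbound : ∀ t ∈ Ico (0 : ℝ) 1,
      ‖(f' (x + t • h) - f' x - f'' (t • h)) h‖ ≤ δ * ‖‖h‖ ^ 2‖ := fun t ht => by
    have hlin := (hball _ (hseg t (Ico_subset_Icc_self ht))).2
    rw [add_sub_cancel_left, norm_smul, Real.norm_of_nonneg ht.1] at hlin
    calc ‖(f' (x + t • h) - f' x - f'' (t • h)) h‖
        ≤ δ * (t * ‖h‖) * ‖h‖ := (ContinuousLinearMap.le_of_opNorm_le _ hlin h)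
      _ ≤ δ * (1 * ‖h‖) * ‖h‖ := by gcongr; exact ht.2.le
      _ = δ * ‖‖h‖ ^ 2‖ := by rw [Real.norm_of_nonneg (by positivity)]; ring
  convert norm_image_sub_le_of_norm_deriv_le_segment_01' hg hbound using 2
  simp only [g, one_smul, one_pow, one_div, zero_smul, add_zero, sub_zero, ne_eq,
    OfNat.ofNat_ne_zero, not_false_eq_true, zero_pow, zero_div]
  abel

theorem ContDiff.eventually_half_sub_mul_norm_sq_le {f : E → ℝ} (hf : ContDiff ℝ 2 f)
    (hf0 : f 0 = 0) (hDf0 : fderiv ℝ f 0 = 0) {c δ : ℝ}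
    (hc : ∀ ξ, c * ‖ξ‖ ^ 2 ≤ iteratedFDeriv ℝ 2 f 0 ![ξ, ξ]) (hδ : 0 < δ) :
    ∀ᶠ ξ in 𝓝 0, (c / 2 - δ) * ‖ξ‖ ^ 2 ≤ f ξ := by
  have hf' : HasFDerivAt (fderiv ℝ f) (fderiv ℝ (fderiv ℝ f) 0) 0 :=
    ((hf.fderiv_right (m := 1) le_rfl).differentiable one_ne_zero 0).hasFDerivAt
  have htaylor := isLittleO_sub_taylor_two
    (Eventually.of_forall fun y => (hf.differentiable two_ne_zero y).hasFDerivAt) hf'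
  filter_upwards [htaylor.bound hδ] with ξ hξ
  have hcξ := hc ξ
  rw [iteratedFDeriv_two_apply] at hcξ
  simp only [zero_add, hf0, hDf0, sub_zero, zero_apply, smul_eq_mul, Real.norm_eq_abs, abs_pow,
    abs_norm, Matrix.cons_val_zero, Matrix.cons_val_one] at hξ hcξ
  linarith [neg_abs_le (f ξ - 2⁻¹ * (fderiv ℝ (fderiv ℝ f) 0) ξ ξ)]

theorem norm_le_mul_norm_sq_of_norm_fderiv_le {g : E → F} {g' : E → E →L[ℝ] F} {K : ℝ}
    (hK : 0 ≤ K) (hg0 : g 0 = 0) (hg : ∀ v, HasFDerivAt g (g' v) v)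
    (hg' : ∀ v, ‖g' v‖ ≤ K * ‖v‖) (u : E) : ‖g u‖ ≤ K * ‖u‖ ^ 2 := by
  have hbound : ∀ v ∈ closedBall (0 : E) ‖u‖, ‖g' v‖ ≤ K * ‖u‖ := fun v hv =>
    (hg' v).trans (mul_le_mul_of_nonneg_left (mem_closedBall_zero_iff.1 hv) hK)
  have := (convex_closedBall (0 : E) ‖u‖).norm_image_sub_le_of_norm_hasFDerivWithin_le
    (fun v _ => (hg v).hasFDerivWithinAt) hbound (mem_closedBall_self (norm_nonneg u))
    (mem_closedBall_zero_iff.2 le_rfl)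
  rwa [hg0, sub_zero, sub_zero, mul_assoc, ← sq] at this

end

theorem energy_positivity_on_center_manifold_general
    {X Y : Type*} [NormedAddCommGroup X] [NormedSpace ℝ X]
    [NormedAddCommGroup Y] [NormedSpace ℝ Y]
    (c₀ c₁ c₂ C' C₀ b : ℝ) (hc₀ : 0 < c₀) (hc₂ : 0 < c₂)
    (hC' : 0 ≤ C') (hC₀ : 0 ≤ C₀)
    (hdet : 0 < c₀ * c₂ - c₁ ^ 2)
    (H₀ : X → ℝ) (H₁ : X → (Y →L[ℝ] ℝ)) (H₂ : X → (Y →L[ℝ] Y →L[ℝ] ℝ))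
    (H₃ : ℝ → X → Y → ℝ) (DuH₃ : ℝ → X → Y → (Y →L[ℝ] ℝ))
    (hH₀smooth : ContDiff ℝ 2 H₀) (hH₀0 : H₀ 0 = 0) (hDH₀0 : fderiv ℝ H₀ 0 = 0)
    (hD2H₀ : ∀ ξ : X, c₀ * ‖ξ‖ ^ 2 ≤ iteratedFDeriv ℝ 2 H₀ 0 ![ξ, ξ])
    (hH₁ : ∀ ξ : X, ‖H₁ ξ‖ ≤ (c₁ + C' * ‖ξ‖) * ‖ξ‖)
    (hH₂ : ∀ (ξ : X) (u : Y), (c₂ - C' * ‖ξ‖) * ‖u‖ ^ 2 ≤ H₂ ξ u u)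
    (hH₃0 : ∀ ε ξ, H₃ ε ξ 0 = 0)
    (hDuH₃ : ∀ ε ξ u, HasFDerivAt (H₃ ε ξ) (DuH₃ ε ξ u) u)
    (hDuH₃0 : ∀ ε ξ, DuH₃ ε ξ 0 = 0)
    (hD2H₃ : ∀ ε ≥ (0:ℝ), ∀ (ξ : X) (u u' : Y),
      ‖DuH₃ ε ξ u - DuH₃ ε ξ u'‖ ≤ C₀ * ε * ‖u - u'‖) :
    ∃ r > (0:ℝ), ∃ cstar > (0:ℝ), ∃ ε₀ > (0:ℝ),
      ∀ ε ∈ Set.Ico (0:ℝ) ε₀, ∀ (ξ : X) (u : Y), ‖ξ‖ ≤ r → ‖u‖ ≤ b →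
        cstar * (‖ξ‖ ^ 2 + ‖u‖ ^ 2) ≤ H₀ ξ + H₁ ξ u + H₂ ξ u u + H₃ ε ξ u := by
  obtain ⟨e, he, hq⟩ : ∃ e > 0, ∀ s t : ℝ,
      4 * e * (s ^ 2 + t ^ 2) ≤ c₀ / 2 * s ^ 2 - c₁ * s * t + c₂ * t ^ 2 := by
    refine ⟨-discrim (c₀ / 2) (-c₁) c₂ / (4 * (c₀ / 2 + c₂)) / 4,
      div_pos (div_pos (by unfold discrim; nlinarith) (by positivity)) four_pos, fun s t => ?_⟩
    have := neg_discrim_div_mul_sq_add_sq_le (-c₁) (by positivity : 0 < c₀ / 2 + c₂) s t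
    linarith
  obtain ⟨r₀, hr₀, hH₀⟩ := nhds_basis_closedBall.eventually_iff.1
    (hH₀smooth.eventually_half_sub_mul_norm_sq_le hH₀0 hDH₀0 hD2H₀ he)
  obtain ⟨r₁, hr₁, hC'r₁⟩ := exists_pos_mul_lt he C'
  obtain ⟨ε₀, hε₀, hC₀ε₀⟩ := exists_pos_mul_lt he C₀
  refine ⟨min r₀ r₁, lt_min hr₀ hr₁, e, he, ε₀, hε₀, ?_⟩
  rintro ε ⟨hε, hεε₀⟩ ξ u hξ -
  have hC'ξ : C' * ‖ξ‖ ≤ e :=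
    (mul_le_mul_of_nonneg_left (hξ.trans (min_le_right _ _)) hC').trans hC'r₁.le
  have hC₀ε : C₀ * ε ≤ e := (mul_le_mul_of_nonneg_left hεε₀.le hC₀).trans hC₀ε₀.le
  have h₀ : (c₀ / 2 - e) * ‖ξ‖ ^ 2 ≤ H₀ ξ :=
    hH₀ (mem_closedBall_zero_iff.2 (hξ.trans (min_le_left _ _)))
  have h₁ : -((c₁ + e) * ‖ξ‖ * ‖u‖) ≤ H₁ ξ u := by
    refine neg_le_of_abs_le ((H₁ ξ).le_of_opNorm_le ((hH₁ ξ).trans ?_) u)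
    gcongr
  have h₂ : (c₂ - e) * ‖u‖ ^ 2 ≤ H₂ ξ u u := (hH₂ ξ u).trans' (by gcongr)
  have h₃ : -(e * ‖u‖ ^ 2) ≤ H₃ ε ξ u := by
    refine neg_le_of_abs_le ((norm_le_mul_norm_sq_of_norm_fderiv_le (K := C₀ * ε) (by positivity)
      (hH₃0 ε ξ) (hDuH₃ ε ξ) (fun v => ?_) u).trans (by gcongr))
    simpa [hDuH₃0] using hD2H₃ ε hε ξ v 0
  linarith [hq ‖ξ‖ ‖u‖, mul_nonneg he.le (sq_nonneg (‖ξ‖ - ‖u‖)), mul_nonneg he.le (sq_nonneg ‖ξ‖),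
    mul_nonneg (mul_nonneg he.le (norm_nonneg ξ)) (norm_nonneg u)]

/-- Positivity of the energy on the center manifold: writing
`H(ξ_c, u) = H₀(ξ_c) + H₁(ξ_c)·u + H₂(ξ_c)(u,u) + H₃(ξ_c,u)` with
`H₀(0) = 0`, `DH₀(0) = 0`, `D²H₀(0) ≥ c₀`, `|H₁(ξ)| ≤ (c₁ + C'|ξ|)|ξ|`,
`H₂(ξ)(u,u) ≥ (c₂ - C'|ξ|)|u|²`, `H₃(ξ,0) = 0`, `D_uH₃(ξ,0) = 0`, `|D²H₃| ≤ C₀ε`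
and `c₀c₂ - c₁² > 0`, there exist `r, c*, ε₀ > 0` with
`H ≥ c*(|ξ_c|² + |u|²)` for `|ξ_c| ≤ r`, `|u| ≤ b` and `ε ∈ [0, ε₀)`. -/
theorem energy_positivity_on_center_manifold
    {X Y : Type*} [NormedAddCommGroup X] [NormedSpace ℝ X]
    [NormedAddCommGroup Y] [NormedSpace ℝ Y]
    (c₀ c₁ c₂ C' C₀ b : ℝ) (hc₀ : 0 < c₀) (hc₁ : 0 ≤ c₁) (hc₂ : 0 < c₂)
    (hC' : 0 ≤ C') (hC₀ : 0 ≤ C₀) (hb : 0 < b)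
    (hdet : 0 < c₀ * c₂ - c₁ ^ 2)
    (H₀ : X → ℝ) (H₁ : X → (Y →L[ℝ] ℝ)) (H₂ : X → (Y →L[ℝ] Y →L[ℝ] ℝ))
    (H₃ : ℝ → X → Y → ℝ) (DuH₃ : ℝ → X → Y → (Y →L[ℝ] ℝ))
    (hH₀smooth : ContDiff ℝ 2 H₀) (hH₀0 : H₀ 0 = 0) (hDH₀0 : fderiv ℝ H₀ 0 = 0)
    (hD2H₀ : ∀ ξ : X, c₀ * ‖ξ‖ ^ 2 ≤ iteratedFDeriv ℝ 2 H₀ 0 ![ξ, ξ])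
    (hH₁ : ∀ ξ : X, ‖H₁ ξ‖ ≤ (c₁ + C' * ‖ξ‖) * ‖ξ‖)
    (hH₂ : ∀ (ξ : X) (u : Y), (c₂ - C' * ‖ξ‖) * ‖u‖ ^ 2 ≤ H₂ ξ u u)
    (hH₃0 : ∀ ε ξ, H₃ ε ξ 0 = 0)
    (hDuH₃ : ∀ ε ξ u, HasFDerivAt (H₃ ε ξ) (DuH₃ ε ξ u) u)
    (hDuH₃0 : ∀ ε ξ, DuH₃ ε ξ 0 = 0)
    (hD2H₃ : ∀ ε ≥ (0:ℝ), ∀ (ξ : X) (u u' : Y),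
      ‖DuH₃ ε ξ u - DuH₃ ε ξ u'‖ ≤ C₀ * ε * ‖u - u'‖) :
    ∃ r > (0:ℝ), ∃ cstar > (0:ℝ), ∃ ε₀ > (0:ℝ),
      ∀ ε ∈ Set.Ico (0:ℝ) ε₀, ∀ (ξ : X) (u : Y), ‖ξ‖ ≤ r → ‖u‖ ≤ b →
        cstar * (‖ξ‖ ^ 2 + ‖u‖ ^ 2) ≤ H₀ ξ + H₁ ξ u + H₂ ξ u u + H₃ ε ξ u :=
  energy_positivity_on_center_manifold_general c₀ c₁ c₂ C' C₀ b hc₀ hc₂ hC' hC₀ hdet H₀ H₁ H₂ H₃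
    DuH₃ hH₀smooth hH₀0 hDH₀0 hD2H₀ hH₁ hH₂ hH₃0 hDuH₃ hDuH₃0 hD2H₃
end

section
/- (Cancellation of oscillatory forcing against a decaying amplitude.) Let J be an invertible antisymmetric m×m matrix with |J^{-1}| ≤ C₀, let w : ℝ_{≤0} → ℝ^{1×m} be C¹ with |w(t)| + |w'(t)| ≤ M e^{αt} for some α > 0 (t ≤ 0), and let y₀ ∈ ℝ^m. Then for every ε > 0, |∫_{-∞}^{0} w(t) e^{(t/ε)J} y₀ dt| ≤ ε C₀ M (1 + 1/α) |y₀|. -/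
/-!
Since `J` is skew-adjoint, `e^{(t/ε)J}` is an isometry, and `v(t) = ε J⁻¹ e^{(t/ε)J} y₀`
is a primitive of the oscillating factor with `|v| ≤ ε C₀ |y₀|`. Integrating by parts
against `w` leaves the boundary term `w(0) v(0)` and the integral of `w' v`; both are
bounded through `|w|, |w'| ≤ M e^{αt}`, giving `ε C₀ M |y₀|` and `ε C₀ M |y₀| / α`.
-/

open scoped RealInnerProductSpace
open MeasureTheory Set Filter Real
open scoped Topology

section ExponentialDecay

variable {F : Type*} [NormedAddCommGroup F] {f : ℝ → F} {C α : ℝ}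

theorem integrableOn_Iic_of_norm_le_mul_exp (hα : 0 < α)
    (hf : AEStronglyMeasurable f (volume.restrict (Iic 0)))
    (hbound : ∀ t ≤ 0, ‖f t‖ ≤ C * exp (α * t)) : IntegrableOn f (Iic 0) :=
  ((integrableOn_exp_mul_Iic hα 0).const_mul C).mono' hf
    (ae_restrict_of_forall_mem measurableSet_Iic hbound)

theorem norm_integral_Iic_le_of_norm_le_mul_exp [NormedSpace ℝ F] (hα : 0 < α)
    (hbound : ∀ t ≤ 0, ‖f t‖ ≤ C * exp (α * t)) : ‖∫ t in Iic 0, f t‖ ≤ C / α :=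
  calc ‖∫ t in Iic 0, f t‖ ≤ ∫ t in Iic 0, C * exp (α * t) :=
        norm_integral_le_of_norm_le ((integrableOn_exp_mul_Iic hα 0).const_mul C)
          (ae_restrict_of_forall_mem measurableSet_Iic hbound)
    _ = C / α := by
      rw [integral_const_mul, integral_exp_mul_Iic hα, mul_zero, exp_zero, mul_one_div]

theorem tendsto_atBot_of_norm_le_mul_exp (hα : 0 < α)
    (hbound : ∀ t ≤ 0, ‖f t‖ ≤ C * exp (α * t)) : Tendsto f atBot (𝓝 0) := by
  refine squeeze_zero_norm' (eventually_atBot.2 ⟨0, hbound⟩) ?_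
  simpa using ((tendsto_exp_atBot.comp (tendsto_id.const_mul_atBot hα)).const_mul C)

end ExponentialDecay

theorem aestronglyMeasurable_restrict_of_hasDerivAt {F : Type*} [NormedAddCommGroup F]
    [NormedSpace ℝ F] [CompleteSpace F] {f f' : ℝ → F} {s : Set ℝ} (hs : MeasurableSet s)
    (hf : ∀ t ∈ s, HasDerivAt f (f' t) t) : AEStronglyMeasurable f' (volume.restrict s) :=
  (stronglyMeasurable_deriv f).aestronglyMeasurable.congr
    (ae_restrict_of_forall_mem hs fun t ht => (hf t ht).deriv)

theorem norm_apply_le_mul_exp {E G : Type*} [NormedAddCommGroup E] [NormedSpace ℝ E]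
    [NormedAddCommGroup G] [NormedSpace ℝ G] {φ : ℝ → E →L[ℝ] G} {x : ℝ → E}
    {M α B : ℝ}
    (hφ : ∀ t ≤ 0, ‖φ t‖ ≤ M * exp (α * t)) (hx : ∀ t ≤ 0, ‖x t‖ ≤ B) :
    ∀ t ≤ 0, ‖φ t (x t)‖ ≤ (M * B) * exp (α * t) := fun t ht =>
  calc ‖φ t (x t)‖ ≤ ‖φ t‖ * ‖x t‖ := (φ t).le_opNorm _
    _ ≤ M * exp (α * t) * B :=
        mul_le_mul (hφ t ht) (hx t ht) (norm_nonneg _) ((norm_nonneg _).trans (hφ t ht))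
    _ = (M * B) * exp (α * t) := by ring

section IntegrationByParts

variable {E G : Type*} [NormedAddCommGroup E] [NormedSpace ℝ E] [NormedAddCommGroup G]
  [NormedSpace ℝ G] [CompleteSpace G] {w w' : ℝ → E →L[ℝ] G} {u v : ℝ → E}

theorem integral_Iic_apply_eq_sub {a : ℝ}
    (hw : ∀ t ≤ a, HasDerivAt w (w' t) t) (hv : ∀ t ≤ a, HasDerivAt v (u t) t)
    (hwu : IntegrableOn (fun t => w t (u t)) (Iic a))
    (hw'v : IntegrableOn (fun t => w' t (v t)) (Iic a))
    (hlim : Tendsto (fun t => w t (v t)) atBot (𝓝 0)) :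
    ∫ t in Iic a, w t (u t) = w a (v a) - ∫ t in Iic a, w' t (v t) := by
  have hparts := integral_Iic_of_hasDerivAt_of_tendsto'
    (fun t ht => (hw t ht).clm_apply (hv t ht)) (hw'v.add hwu) hlim
  rw [integral_add hw'v hwu, sub_zero] at hparts
  rw [← hparts, add_sub_cancel_left]

theorem norm_integral_Iic_apply_le [CompleteSpace E] {M α K L : ℝ} (hα : 0 < α)
    (hw : ∀ t ≤ 0, HasDerivAt w (w' t) t) (hv : ∀ t ≤ 0, HasDerivAt v (u t) t)
    (hwbound : ∀ t ≤ 0, ‖w t‖ + ‖w' t‖ ≤ M * exp (α * t))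
    (hu : ∀ t ≤ 0, ‖u t‖ ≤ K) (hvbound : ∀ t ≤ 0, ‖v t‖ ≤ L) :
    ‖∫ t in Iic 0, w t (u t)‖ ≤ M * L * (1 + 1 / α) := by
  have hw_le : ∀ t ≤ 0, ‖w t‖ ≤ M * exp (α * t) := fun t ht =>
    (le_add_of_nonneg_right (norm_nonneg _)).trans (hwbound t ht)
  have hw'_le : ∀ t ≤ 0, ‖w' t‖ ≤ M * exp (α * t) := fun t ht =>
    (le_add_of_nonneg_left (norm_nonneg _)).trans (hwbound t ht)
  have hIic := measurableSet_Iic (a := (0 : ℝ))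
  have hw_meas : AEStronglyMeasurable w (volume.restrict (Iic 0)) :=
    ContinuousOn.aestronglyMeasurable
      (fun t ht => (hw t ht).continuousAt.continuousWithinAt) hIic
  have hv_meas : AEStronglyMeasurable v (volume.restrict (Iic 0)) :=
    ContinuousOn.aestronglyMeasurable
      (fun t ht => (hv t ht).continuousAt.continuousWithinAt) hIic
  have hwu : IntegrableOn (fun t => w t (u t)) (Iic 0) :=
    integrableOn_Iic_of_norm_le_mul_exp hα
      (isBoundedBilinearMap_apply.continuous.comp_aestronglyMeasurable
        (hw_meas.prodMk (aestronglyMeasurable_restrict_of_hasDerivAt hIic hv)))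
      (norm_apply_le_mul_exp hw_le hu)
  have hw'v : IntegrableOn (fun t => w' t (v t)) (Iic 0) :=
    integrableOn_Iic_of_norm_le_mul_exp hα
      (isBoundedBilinearMap_apply.continuous.comp_aestronglyMeasurable
        ((aestronglyMeasurable_restrict_of_hasDerivAt hIic hw).prodMk hv_meas))
      (norm_apply_le_mul_exp hw'_le hvbound)
  rw [integral_Iic_apply_eq_sub hw hv hwu hw'v
    (tendsto_atBot_of_norm_le_mul_exp hα (norm_apply_le_mul_exp hw_le hvbound))]
  calc ‖w 0 (v 0) - ∫ t in Iic 0, w' t (v t)‖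
      ≤ ‖w 0 (v 0)‖ + ‖∫ t in Iic 0, w' t (v t)‖ := norm_sub_le _ _
    _ ≤ M * L * exp (α * 0) + M * L / α :=
        add_le_add (norm_apply_le_mul_exp hw_le hvbound 0 le_rfl)
          (norm_integral_Iic_le_of_norm_le_mul_exp hα (norm_apply_le_mul_exp hw'_le hvbound))
    _ = M * L * (1 + 1 / α) := by rw [mul_zero, exp_zero]; ring

end IntegrationByParts

section SkewAdjoint

variable {E : Type*} [NormedAddCommGroup E] [InnerProductSpace ℝ E] [CompleteSpace E]

theorem ContinuousLinearMap.mem_skewAdjoint_of_inner {A : E →L[ℝ] E}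
    (hA : ∀ u v : E, ⟪A u, v⟫ = -⟪u, A v⟫) : A ∈ skewAdjoint (E →L[ℝ] E) := by
  rw [skewAdjoint.mem_iff, ContinuousLinearMap.star_eq_adjoint, eq_comm,
    ContinuousLinearMap.eq_adjoint_iff]
  intro u v
  simp [hA]

theorem ContinuousLinearMap.norm_exp_apply_of_mem_skewAdjoint {A : E →L[ℝ] E}
    (hA : A ∈ skewAdjoint (E →L[ℝ] E)) (y : E) : ‖NormedSpace.exp A y‖ = ‖y‖ := by
  have hU : NormedSpace.exp A ∈ unitary (E →L[ℝ] E) := by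
    let _ : NormedAlgebra ℚ (E →L[ℝ] E) := .restrictScalars ℚ ℝ _
    exact NormedSpace.exp_mem_unitary_of_mem_skewAdjoint hA
  exact norm_map_of_mem_unitary hU y

end SkewAdjoint

theorem ContinuousLinearMap.hasDerivAt_exp_smul_div_apply {E : Type*} [NormedAddCommGroup E]
    [NormedSpace ℝ E] [CompleteSpace E] (A : E →L[ℝ] E) (ε : ℝ) (y : E) (t : ℝ) :
    HasDerivAt (fun t : ℝ => NormedSpace.exp ((t / ε) • A) y)
      (ε⁻¹ • A (NormedSpace.exp ((t / ε) • A) y)) t := by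
  have hdiv : HasDerivAt (fun t : ℝ => t / ε) ε⁻¹ t := by
    simpa [div_eq_mul_inv] using (hasDerivAt_id t).div_const ε
  have hexp := (hasDerivAt_exp_smul_const' (𝕂 := ℝ) A (t / ε)).scomp t hdiv
  simpa [Function.comp_def] using hexp.clm_apply (hasDerivAt_const t y)

theorem norm_integral_Iic_apply_exp_skew_le {E : Type*} [NormedAddCommGroup E]
    [InnerProductSpace ℝ E] [CompleteSpace E] {C₀ M α ε : ℝ} (hα : 0 < α) (hε : 0 < ε)
    (J : E ≃L[ℝ] E) (hJ : ∀ u v : E, ⟪J u, v⟫ = -⟪u, J v⟫)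
    (hJinv : ‖(J.symm : E →L[ℝ] E)‖ ≤ C₀)
    {w w' : ℝ → E →L[ℝ] ℝ} (hw : ∀ t ≤ 0, HasDerivAt w (w' t) t)
    (hwbound : ∀ t ≤ 0, ‖w t‖ + ‖w' t‖ ≤ M * exp (α * t)) (y : E) :
    ‖∫ t in Iic 0, w t (NormedSpace.exp ((t / ε) • (J : E →L[ℝ] E)) y)‖
      ≤ ε * C₀ * M * (1 + 1 / α) * ‖y‖ := by
  set u := fun t : ℝ => NormedSpace.exp ((t / ε) • (J : E →L[ℝ] E)) y
  have hu : ∀ t, ‖u t‖ = ‖y‖ := fun t =>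
    ContinuousLinearMap.norm_exp_apply_of_mem_skewAdjoint
      (skewAdjoint.smul_mem _ (ContinuousLinearMap.mem_skewAdjoint_of_inner hJ)) y
  have hv : ∀ t, HasDerivAt (fun t => ε • J.symm (u t)) (u t) t := fun t => by
    have h := ((J.symm : E →L[ℝ] E).hasFDerivAt.comp_hasDerivAt t
      ((J : E →L[ℝ] E).hasDerivAt_exp_smul_div_apply ε y t)).const_smul ε
    convert h using 1
    · rfl
    · simp only [u, ContinuousLinearEquiv.coe_coe, map_smul, J.symm_apply_apply, smul_smul,
        mul_inv_cancel₀ hε.ne', one_smul]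
  have hv_le : ∀ t, ‖ε • J.symm (u t)‖ ≤ ε * C₀ * ‖y‖ := fun t =>
    calc ‖ε • J.symm (u t)‖ = ε * ‖J.symm (u t)‖ := by
          rw [norm_smul, Real.norm_of_nonneg hε.le]
      _ ≤ ε * (C₀ * ‖y‖) := by
        gcongr
        grw [← hu t, ← hJinv]
        exact (J.symm : E →L[ℝ] E).le_opNorm (u t)
      _ = ε * C₀ * ‖y‖ := by ring
  refine (norm_integral_Iic_apply_le hα hw (fun t _ => hv t) hwbound (fun t _ => (hu t).le)
    (fun t _ => hv_le t)).trans_eq ?_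
  ring

theorem oscillation_against_decaying_amplitude_general
    (m : ℕ) (C₀ M α : ℝ) (hα : 0 < α)
    (J : EuclideanSpace ℝ (Fin m) ≃L[ℝ] EuclideanSpace ℝ (Fin m))
    (hJ : ∀ u v : EuclideanSpace ℝ (Fin m), ⟪J u, v⟫ = -⟪u, J v⟫)
    (hJinv : ‖(J.symm : EuclideanSpace ℝ (Fin m) →L[ℝ] EuclideanSpace ℝ (Fin m))‖ ≤ C₀)
    (w w' : ℝ → (EuclideanSpace ℝ (Fin m) →L[ℝ] ℝ))
    (hw : ∀ t ≤ (0:ℝ), HasDerivAt w (w' t) t)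
    (hwbd : ∀ t ≤ (0:ℝ), ‖w t‖ + ‖w' t‖ ≤ M * Real.exp (α * t))
    (y₀ : EuclideanSpace ℝ (Fin m)) (ε : ℝ) (hε : 0 < ε) :
    |∫ t in Set.Iic (0:ℝ),
        w t (NormedSpace.exp ((t / ε) •
          (J : EuclideanSpace ℝ (Fin m) →L[ℝ] EuclideanSpace ℝ (Fin m))) y₀)|
      ≤ ε * C₀ * M * (1 + 1 / α) * ‖y₀‖ := by
  rw [← Real.norm_eq_abs]
  exact norm_integral_Iic_apply_exp_skew_le hα hε J hJ hJinv hw hwbd y₀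

/-- Cancellation of oscillatory forcing against a decaying amplitude: if `J` is an
invertible antisymmetric matrix with `|J⁻¹| ≤ C₀` and `w : ℝ₋ → (ℝ^m)*` is `C¹`
with `|w(t)| + |w'(t)| ≤ M e^{αt}` for `t ≤ 0`, then for every `ε > 0`,
`|∫_{-∞}^0 w(t) e^{(t/ε)J} y₀ dt| ≤ ε C₀ M (1 + 1/α) |y₀|`. -/
theorem oscillation_against_decaying_amplitude
    (m : ℕ) (C₀ M α : ℝ) (hα : 0 < α) (hM : 0 ≤ M)
    (J : EuclideanSpace ℝ (Fin m) ≃L[ℝ] EuclideanSpace ℝ (Fin m))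
    (hJ : ∀ u v : EuclideanSpace ℝ (Fin m), ⟪J u, v⟫ = -⟪u, J v⟫)
    (hJinv : ‖(J.symm : EuclideanSpace ℝ (Fin m) →L[ℝ] EuclideanSpace ℝ (Fin m))‖ ≤ C₀)
    (w w' : ℝ → (EuclideanSpace ℝ (Fin m) →L[ℝ] ℝ))
    (hw : ∀ t ≤ (0:ℝ), HasDerivAt w (w' t) t)
    (hwbd : ∀ t ≤ (0:ℝ), ‖w t‖ + ‖w' t‖ ≤ M * Real.exp (α * t))
    (y₀ : EuclideanSpace ℝ (Fin m)) (ε : ℝ) (hε : 0 < ε) :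
    |∫ t in Set.Iic (0:ℝ),
        w t (NormedSpace.exp ((t / ε) •
          (J : EuclideanSpace ℝ (Fin m) →L[ℝ] EuclideanSpace ℝ (Fin m))) y₀)|
      ≤ ε * C₀ * M * (1 + 1 / α) * ‖y₀‖ :=
  oscillation_against_decaying_amplitude_general m C₀ M α hα J hJ hJinv w w' hw hwbd y₀ ε hε
end
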